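/- Let G be a finite simple graph with vertex set V, edge set E with |E| ≥ 1, maximum degree Δ, and matching number ν (the greatest size of a matching of G). Let r ≥ 1 be a natural number. Suppose μ : V → ℝ is a nonnegative vertex weighting satisfying μ(u) + μ(v) ≥ 2 − 2^{1−r} for every edge {u,v} of G, and suppose ∑_{v ∈ V} μ(v) > 0. Then (∑_{v ∈ V} μ(v))^{−1} ≤ min(Δ/|E|, 1/ν) · (2 − 2^{1−r})^{−1}. -/

import Mathlib

/-!
Put `c = 2 - 2^(1-r) > 0`. Summing the edge constraint `c ≤ μ u + μ v` over the edges of a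
maximum matching counts every vertex at most once, so `ν c ≤ ∑ μ`; summing it over all edges
counts every vertex `v` exactly `deg v ≤ Δ` times, so `|E| c ≤ Δ ∑ μ`. Inverting both bounds gives
the claim.
-/

open Finset

namespace SimpleGraph

variable {V : Type*} [Fintype V] [DecidableEq V] (G : SimpleGraph V) [DecidableRel G.Adj]
  {R : Type*} [AddCommMonoid R]

theorem sum_edgeFinset_sum_toFinset (w : V → R) :
    ∑ e ∈ G.edgeFinset, ∑ v ∈ e.toFinset, w v = ∑ v, G.degree v • w v := by
  rw [sum_comm' (t' := univ) (s' := fun v => G.incidenceFinset v) fun e v => by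
    simp [incidenceFinset_eq_filter, and_comm]]
  simp only [sum_const, card_incidenceFinset_eq_degree]

variable {G} {w : V → R} {c : R}

theorem le_sum_toFinset_of_mem_edgeFinset [LE R] (hw : ∀ u v, G.Adj u v → c ≤ w u + w v)
    {e : Sym2 V} (he : e ∈ G.edgeFinset) : c ≤ ∑ v ∈ e.toFinset, w v := by
  induction e using Sym2.ind with
  | _ u v =>
    rw [mem_edgeFinset, mem_edgeSet] at he
    rw [Sym2.toFinset_mk_eq, sum_pair he.ne]
    exact hw u v he

variable [PartialOrder R] [IsOrderedAddMonoid R]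

theorem card_nsmul_le_sum_of_matching (hw0 : ∀ v, 0 ≤ w v)
    (hw : ∀ u v, G.Adj u v → c ≤ w u + w v) {M : Finset (Sym2 V)} (hM : M ⊆ G.edgeFinset)
    (hdisj : ∀ e ∈ M, ∀ f ∈ M, e ≠ f → ∀ v, v ∈ e → v ∉ f) :
    #M • c ≤ ∑ v, w v := by
  have hpairwise : (M : Set (Sym2 V)).PairwiseDisjoint Sym2.toFinset :=
    fun e he f hf hef => Finset.disjoint_left.2 fun v hve hvf =>
      hdisj e he f hf hef v (Sym2.mem_toFinset.1 hve) (Sym2.mem_toFinset.1 hvf)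
  calc #M • c ≤ ∑ e ∈ M, ∑ v ∈ e.toFinset, w v :=
        card_nsmul_le_sum _ _ _ fun e he => le_sum_toFinset_of_mem_edgeFinset hw (hM he)
    _ = ∑ v ∈ M.biUnion Sym2.toFinset, w v := (sum_biUnion hpairwise).symm
    _ ≤ ∑ v, w v := sum_le_sum_of_subset_of_nonneg (subset_univ _) fun v _ _ => hw0 v

theorem card_edgeFinset_nsmul_le_maxDegree_nsmul_sum (hw0 : ∀ v, 0 ≤ w v)
    (hw : ∀ u v, G.Adj u v → c ≤ w u + w v) :
    #G.edgeFinset • c ≤ G.maxDegree • ∑ v, w v :=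
  calc #G.edgeFinset • c ≤ ∑ e ∈ G.edgeFinset, ∑ v ∈ e.toFinset, w v :=
        card_nsmul_le_sum _ _ _ fun _ he => le_sum_toFinset_of_mem_edgeFinset hw he
    _ = ∑ v, G.degree v • w v := G.sum_edgeFinset_sum_toFinset w
    _ ≤ ∑ v, G.maxDegree • w v :=
        sum_le_sum fun v _ => nsmul_le_nsmul_left (hw0 v) (G.degree_le_maxDegree v)
    _ = G.maxDegree • ∑ v, w v := (smul_sum ..).symm

end SimpleGraph

open SimpleGraph

theorem inv_sum_le_min_maxDegree_matching_general
    {V : Type*} [Fintype V] [DecidableEq V] (G : SimpleGraph V) [DecidableRel G.Adj]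
    (hE : 1 ≤ G.edgeFinset.card)
    (ν : ℕ)
    (hν₁ : ∃ M : Finset (Sym2 V), M ⊆ G.edgeFinset ∧
      (∀ e ∈ M, ∀ f ∈ M, e ≠ f → ∀ v, v ∈ e → v ∉ f) ∧ M.card = ν)
    (hν₂ : ∀ M : Finset (Sym2 V), M ⊆ G.edgeFinset →
      (∀ e ∈ M, ∀ f ∈ M, e ≠ f → ∀ v, v ∈ e → v ∉ f) → M.card ≤ ν)
    (r : ℕ) (hr : 1 ≤ r)
    (μ : V → ℝ) (hμ0 : ∀ v, 0 ≤ μ v)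
    (hμ : ∀ u v, G.Adj u v → 2 - (2 : ℝ) ^ (1 - (r : ℤ)) ≤ μ u + μ v) :
    (∑ v, μ v)⁻¹ ≤
      min ((G.maxDegree : ℝ) / (G.edgeFinset.card : ℝ)) (1 / (ν : ℝ)) *
        (2 - (2 : ℝ) ^ (1 - (r : ℤ)))⁻¹ := by
  set c : ℝ := 2 - (2 : ℝ) ^ (1 - (r : ℤ))
  have hc : 0 < c := sub_pos.2 <| by
    simpa using zpow_lt_zpow_right₀ one_lt_two (show 1 - (r : ℤ) < 1 by omega)
  have hν : 1 ≤ ν := by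
    obtain ⟨e, he⟩ := card_pos.1 hE
    simpa using hν₂ {e} (singleton_subset_iff.2 he) (by simp)
  obtain ⟨M, hM, hdisj, rfl⟩ := hν₁
  have hmatching := card_nsmul_le_sum_of_matching hμ0 hμ hM hdisj
  have hedges := card_edgeFinset_nsmul_le_maxDegree_nsmul_sum hμ0 hμ
  simp only [nsmul_eq_mul] at hmatching hedges
  have hE' : (1 : ℝ) ≤ #G.edgeFinset := by exact_mod_cast hE
  have hν' : (1 : ℝ) ≤ #M := by exact_mod_cast hν
  have hsum : 0 < ∑ v, μ v := by nlinarith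
  rw [min_mul_of_nonneg _ _ (inv_nonneg.2 hc.le)]
  refine le_min ?_ ?_
  · field_simp
    linarith
  · field_simp
    linarith

/-- **Combinatorial core of the upper bound on the PIR capacity of `G^(r)`.**
If `G` has at least one edge, maximum degree `Δ`, matching number `ν`, and `μ` is a nonnegative
vertex weighting with `μ u + μ v ≥ 2 - 2^(1-r)` on every edge and positive total sum, then
`(∑ v, μ v)⁻¹ ≤ min (Δ/|E|) (1/ν) * (2 - 2^(1-r))⁻¹`. -/
theorem inv_sum_le_min_maxDegree_matching
    {V : Type*} [Fintype V] [DecidableEq V] (G : SimpleGraph V) [DecidableRel G.Adj]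
    (hE : 1 ≤ G.edgeFinset.card)
    (ν : ℕ)
    (hν₁ : ∃ M : Finset (Sym2 V), M ⊆ G.edgeFinset ∧
      (∀ e ∈ M, ∀ f ∈ M, e ≠ f → ∀ v, v ∈ e → v ∉ f) ∧ M.card = ν)
    (hν₂ : ∀ M : Finset (Sym2 V), M ⊆ G.edgeFinset →
      (∀ e ∈ M, ∀ f ∈ M, e ≠ f → ∀ v, v ∈ e → v ∉ f) → M.card ≤ ν)
    (r : ℕ) (hr : 1 ≤ r)
    (μ : V → ℝ) (hμ0 : ∀ v, 0 ≤ μ v)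
    (hμ : ∀ u v, G.Adj u v → 2 - (2 : ℝ) ^ (1 - (r : ℤ)) ≤ μ u + μ v)
    (hsum : 0 < ∑ v, μ v) :
    (∑ v, μ v)⁻¹ ≤
      min ((G.maxDegree : ℝ) / (G.edgeFinset.card : ℝ)) (1 / (ν : ℝ)) *
        (2 - (2 : ℝ) ^ (1 - (r : ℤ)))⁻¹ :=
  inv_sum_le_min_maxDegree_matching_general G hE ν hν₁ hν₂ r hr μ hμ0 hμ
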